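/- arXiv:2302.05594 — 2 statements merged into one kernel-verified Lean document; each statement's English description precedes it below -/
import Mathlib

section
/- Define φ_k(x) = J_k(x) + a_k J_{k+1}(x) + b_k J_{k+2}(x) with a_k = −(2k+3)/(k+3)² and b_k = −(k+2)²(2k+3)/((k+3)²(2k+7)), where J_n = L_{n+2} − L_n. Then φ_k(±1) = 0, φ_k'(1) = 0, and φ_k''(−1) = 0. -/
theorem basis_phi_boundary_conditions (J : ℕ → ℝ → ℝ)
    (hsmooth : ∀ n, ContDiff ℝ (⊤ : ℕ∞) (J n))
    (hJ1 : ∀ n, J n 1 = 0)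
    (hJm1 : ∀ n, J n (-1) = 0)
    (hJ'1 : ∀ n, deriv (J n) 1 = 2 * (n : ℝ) + 3)
    (hJ''m1 : ∀ n, iteratedDeriv 2 (J n) (-1) =
      (1 / 2) * (-1 : ℝ) ^ n * (n + 1) * (n + 2) * (2 * (n : ℝ) + 3))
    (k : ℕ) :
    let a : ℝ := -(2 * (k : ℝ) + 3) / ((k : ℝ) + 3) ^ 2
    let b : ℝ := -((k : ℝ) + 2) ^ 2 * (2 * (k : ℝ) + 3) /
      (((k : ℝ) + 3) ^ 2 * (2 * (k : ℝ) + 7))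
    let φ : ℝ → ℝ := fun x => J k x + a * J (k + 1) x + b * J (k + 2) x
    φ 1 = 0 ∧ φ (-1) = 0 ∧ deriv φ 1 = 0 ∧ iteratedDeriv 2 φ (-1) = 0 := by
  intro a b φ
  have hd : ∀ n, Differentiable ℝ (J n) := fun n => (hsmooth n).differentiable (by simp)
  have hd' : ∀ n, Differentiable ℝ (deriv (J n)) := fun n => by
    have h1 : ContDiff ℝ ((⊤:ℕ∞):WithTop ℕ∞) (J n) := (hsmooth n).of_le (mod_cast le_top)
    have := (h1.iterate_deriv 1).differentiable (by simp)
    simpa using this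
  have hφ' : deriv φ = fun x =>
      deriv (J k) x + a * deriv (J (k + 1)) x + b * deriv (J (k + 2)) x := by
    funext x
    rw [show φ = (fun x => J k x + a * J (k + 1) x + b * J (k + 2) x) from rfl]
    rw [deriv_fun_add (((hd k) x).fun_add (((hd (k+1)) x).const_mul a)) (((hd (k+2)) x).const_mul b),
      deriv_fun_add ((hd k) x) (((hd (k+1)) x).const_mul a),
      deriv_const_mul a ((hd (k+1)) x), deriv_const_mul b ((hd (k+2)) x)]
  have hJ2 : ∀ n, deriv (deriv (J n)) = iteratedDeriv 2 (J n) := by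
    intro n
    rw [iteratedDeriv_succ, iteratedDeriv_one]
  have hφ'' : iteratedDeriv 2 φ (-1) =
      iteratedDeriv 2 (J k) (-1) + a * iteratedDeriv 2 (J (k + 1)) (-1) +
        b * iteratedDeriv 2 (J (k + 2)) (-1) := by
    rw [iteratedDeriv_succ, iteratedDeriv_one, hφ']
    rw [deriv_fun_add (((hd' k) (-1)).fun_add (((hd' (k+1)) (-1)).const_mul a))
        (((hd' (k+2)) (-1)).const_mul b),
      deriv_fun_add ((hd' k) (-1)) (((hd' (k+1)) (-1)).const_mul a),
      deriv_const_mul a ((hd' (k+1)) (-1)), deriv_const_mul b ((hd' (k+2)) (-1)),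
      hJ2, hJ2, hJ2]
  have hk3 : ((k : ℝ) + 3) ^ 2 ≠ 0 := by positivity
  have hk7 : (2 * (k : ℝ) + 7) ≠ 0 := by positivity
  refine ⟨?_, ?_, ?_, ?_⟩
  · simp [φ, hJ1]
  · simp [φ, hJm1]
  · simp only [hφ', hJ'1]
    push_cast
    simp only [a, b]
    field_simp
    ring
  · rw [hφ'', hJ''m1, hJ''m1, hJ''m1]
    push_cast
    simp only [a, b, pow_add, pow_one]
    field_simp
    ring
end

section
/- Let F : ℝⁿ → ℝⁿ be continuously differentiable with F(r) = 0 and the derivative DF(r) invertible. Define the deflated map G(x) = (1/‖x−r‖² + 1) F(x) for x ≠ r. Then for every sequence x_i → r with x_i ≠ r, liminf ‖G(x_i)‖ > 0; in fact ‖G(x_i)‖ does not tend to 0. -/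
open Filter Topology Asymptotics

theorem HasFDerivAt.isBigO_sub_rev_of_equiv {𝕜 E F : Type*} [NontriviallyNormedField 𝕜]
    [NormedAddCommGroup E] [NormedSpace 𝕜 E] [NormedAddCommGroup F] [NormedSpace 𝕜 F]
    {f : E → F} {e : E ≃L[𝕜] F} {x₀ : E} (hf : HasFDerivAt f (e : E →L[𝕜] F) x₀) :
    (fun x => x - x₀) =O[𝓝 x₀] fun x => f x - f x₀ :=
  -- `f x - f x₀ ~ e (x - x₀)`, and `x - x₀ = e.symm (e (x - x₀))` is dominated by `e (x - x₀)`.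
  have he := e.isBigO_sub_rev (𝓝 x₀) x₀
  he.trans (IsEquivalent.isBigO_symm (hf.isLittleO.trans_isBigO he))

/-- Once `‖x - r‖ ≤ C ‖f x‖`, the deflation factor `1 / ‖x - r‖ ^ 2` more than compensates
the linear vanishing of `f` at `r`. -/
theorem eventually_le_norm_deflation_of_isBigO {E F : Type*} [NormedAddCommGroup E]
    [NormedAddCommGroup F] [NormedSpace ℝ F] {f : E → F} {r : E}
    (hf : (fun x => x - r) =O[𝓝 r] f) :
    ∃ ε > 0, ∀ᶠ x in 𝓝[≠] r, ε ≤ ‖(1 / ‖x - r‖ ^ 2 + 1) • f x‖ := by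
  obtain ⟨C, hC, hbound⟩ := hf.exists_pos
  refine ⟨C⁻¹, inv_pos.2 hC, ?_⟩
  have hnear : ∀ᶠ x in 𝓝 r, ‖x - r‖ ≤ 1 := by
    filter_upwards [Metric.closedBall_mem_nhds r one_pos] with x hx
    rwa [Metric.mem_closedBall, dist_eq_norm] at hx
  filter_upwards [nhdsWithin_le_nhds (hbound.bound.and hnear), self_mem_nhdsWithin]
    with x ⟨hxf, hx1⟩ hxr
  have hd : 0 < ‖x - r‖ := norm_pos_iff.2 (sub_ne_zero.2 hxr)
  rw [norm_smul, Real.norm_of_nonneg (by positivity)]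
  calc C⁻¹ ≤ C⁻¹ / ‖x - r‖ := le_div_self (by positivity) hd hx1
    _ = 1 / ‖x - r‖ ^ 2 * (C⁻¹ * ‖x - r‖) := by field_simp
    _ ≤ 1 / ‖x - r‖ ^ 2 * ‖f x‖ := by
        gcongr
        rwa [inv_mul_le_iff₀ hC]
    _ ≤ (1 / ‖x - r‖ ^ 2 + 1) * ‖f x‖ := by gcongr; linarith

theorem deflated_map_bounded_away_from_zero (n : ℕ)
    (F : EuclideanSpace ℝ (Fin n) → EuclideanSpace ℝ (Fin n))
    (r : EuclideanSpace ℝ (Fin n))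
    (hF : ContDiff ℝ 1 F) (hFr : F r = 0)
    (hinv : ∃ e : EuclideanSpace ℝ (Fin n) ≃L[ℝ] EuclideanSpace ℝ (Fin n),
      (e : EuclideanSpace ℝ (Fin n) →L[ℝ] EuclideanSpace ℝ (Fin n)) = fderiv ℝ F r)
    (x : ℕ → EuclideanSpace ℝ (Fin n))
    (hxne : ∀ i, x i ≠ r)
    (hxlim : Filter.Tendsto x Filter.atTop (nhds r)) :
    (∃ ε > 0, ∀ᶠ i in Filter.atTop,
        ε ≤ ‖(1 / ‖x i - r‖ ^ 2 + 1) • F (x i)‖) ∧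
      ¬ Filter.Tendsto (fun i => ‖(1 / ‖x i - r‖ ^ 2 + 1) • F (x i)‖)
        Filter.atTop (nhds 0) := by
  obtain ⟨e, he⟩ := hinv
  have hderiv : HasFDerivAt F (e : EuclideanSpace ℝ (Fin n) →L[ℝ] _) r :=
    he ▸ (hF.differentiable one_ne_zero r).hasFDerivAt
  have hbigO := hderiv.isBigO_sub_rev_of_equiv
  simp only [hFr, sub_zero] at hbigO
  obtain ⟨ε, hε, hlow⟩ := eventually_le_norm_deflation_of_isBigO hbigO
  have hlow_seq := (tendsto_nhdsWithin_iff.2 ⟨hxlim, Eventually.of_forall hxne⟩).eventually hlow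
  refine ⟨⟨ε, hε, hlow_seq⟩, fun hzero => ?_⟩
  obtain ⟨i, hle, hlt⟩ := (hlow_seq.and (hzero.eventually (gt_mem_nhds hε))).exists
  exact hle.not_gt hlt
end
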